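/- arXiv:2311.13903 — 6 statements merged into one kernel-verified Lean document; each statement's English description precedes it below -/
import Mathlib

section
/- Let C be a compact convex body in ℝ², centrally symmetric with center p. If there exists a point x ∈ ∂C that is not an endpoint of any diameter segment of C, then C can be partitioned into two subsets each of diameter strictly less than diam(C). (The segment joining x to its reflection 2p − x splits every diameter segment, and the two resulting pieces have strictly smaller diameter.) -/
/-!
Since `C` is symmetric about `p`, it lies in the closed ball of radius `diam C / 2` about `p`,
and by strict convexity of the Euclidean norm every diametral pair of `C` is antipodal,
`{a, 2p - a}` with `a` on the boundary sphere of that ball. Cut `C` along the line `L` through `p`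
and `x`. A closed half-plane bounded by `L` contains both points of an antipodal pair only if they
lie on `L`; but `C ∩ L` is the chord from `x` to `2p - x` (as `p` is interior and `x` is not), and
`x` is strictly inside the ball. So neither closed half of `C` contains a diametral pair, and by
compactness each has diameter less than `diam C`.
-/

open Bornology Metric Set

theorem IsCompact.exists_dist_eq_diam {α : Type*} [PseudoMetricSpace α] {s : Set α}
    (hs : IsCompact s) (hne : s.Nonempty) : ∃ a ∈ s, ∃ b ∈ s, dist a b = diam s := by
  obtain ⟨⟨a, b⟩, ⟨ha, hb⟩, hmax⟩ :=
    (hs.prod hs).exists_isMaxOn (hne.prod hne) continuous_dist.continuousOn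
  refine ⟨a, ha, b, hb, (dist_le_diam_of_mem hs.isBounded ha hb).antisymm ?_⟩
  exact diam_le_of_forall_dist_le dist_nonneg fun x hx y hy => hmax (mk_mem_prod hx hy)

theorem LinearMap.exists_ker_eq_span_singleton {K V : Type*} [Field K] [AddCommGroup V]
    [Module K V] (hV : Module.finrank K V = 2) {v : V} (hv : v ≠ 0) :
    ∃ f : V →ₗ[K] K, ker f = K ∙ v := by
  have : FiniteDimensional K V := Module.finite_of_finrank_eq_succ hV
  have hspan : Module.finrank K (K ∙ v) = 1 := finrank_span_singleton hv
  obtain ⟨f, hf, hle⟩ := (K ∙ v).exists_le_ker_of_lt_top <|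
    lt_top_iff_ne_top.2 fun h => by
      rw [h, finrank_top, hV] at hspan
      omega
  have hrange : Module.finrank K (range f) = 1 := by
    rw [range_eq_top_of_surjective f (surjective_of_ne_zero hf)]
    simp
  refine ⟨f, (Submodule.eq_of_le_of_finrank_eq hle ?_).symm⟩
  have := finrank_range_add_finrank_ker f
  omega

section CentrallySymmetric

variable {E : Type*} [NormedAddCommGroup E] [NormedSpace ℝ E] {C : Set E} {p a b x : E}

theorem dist_two_smul_sub_self (p x : E) : dist x ((2 : ℝ) • p - x) = 2 * dist x p := by
  rw [dist_eq_norm, dist_eq_norm, show x - ((2 : ℝ) • p - x) = (2 : ℝ) • (x - p) by module,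
    norm_smul, Real.norm_two]

theorem dist_le_half_diam_of_symm (hC : IsBounded C) (hsym : ∀ x ∈ C, (2 : ℝ) • p - x ∈ C)
    (ha : a ∈ C) : dist a p ≤ diam C / 2 := by
  have := dist_le_diam_of_mem hC ha (hsym a ha)
  rw [dist_two_smul_sub_self] at this
  linarith

theorem eq_two_smul_sub_of_dist_eq_diam [StrictConvexSpace ℝ E] (hC : IsBounded C)
    (hsym : ∀ x ∈ C, (2 : ℝ) • p - x ∈ C) (ha : a ∈ C) (hb : b ∈ C) (hab : dist a b = diam C) :
    b = (2 : ℝ) • p - a := by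
  have hap := dist_le_half_diam_of_symm hC hsym ha
  have hbp := dist_le_half_diam_of_symm hC hsym hb
  have htri := dist_triangle_right a b p
  have hmid : p = midpoint ℝ a b :=
    eq_midpoint_of_dist_eq_half (by linarith) (by rw [dist_comm]; linarith)
  rw [hmid, midpoint_eq_smul_add, invOf_eq_inv]
  module

theorem Convex.mem_interior_of_symm (hconv : Convex ℝ C) (hint : (interior C).Nonempty)
    (hsym : ∀ x ∈ C, (2 : ℝ) • p - x ∈ C) : p ∈ interior C := by
  obtain ⟨q, hq⟩ := hint
  refine hconv.openSegment_interior_self_subset_interior hq (hsym q (interior_subset hq)) ?_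
  exact ⟨1 / 2, 1 / 2, by norm_num, by norm_num, by norm_num, by module⟩

theorem Convex.le_one_of_sub_eq_smul_sub (hconv : Convex ℝ C) (hp : p ∈ interior C)
    (hx : x ∉ interior C) (ha : a ∈ C) {t : ℝ} (hat : a - p = t • (x - p)) : t ≤ 1 := by
  by_contra! ht
  refine hx (hconv.openSegment_interior_self_subset_interior hp ha ?_)
  have ht0 : t ≠ 0 := by positivity
  refine ⟨1 - 1 / t, 1 / t, by rw [sub_pos, div_lt_one (by positivity)]; exact ht,
    by positivity, by ring, ?_⟩
  rw [show a = p + t • (x - p) by rw [← hat]; abel]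
  match_scalars <;> field_simp; ring

theorem Convex.dist_le_of_sub_mem_span (hconv : Convex ℝ C) (hp : p ∈ interior C)
    (hsym : ∀ x ∈ C, (2 : ℝ) • p - x ∈ C) (hx : x ∉ interior C) (ha : a ∈ C)
    (hax : a - p ∈ ℝ ∙ (x - p)) : dist a p ≤ dist x p := by
  obtain ⟨t, ht⟩ := Submodule.mem_span_singleton.1 hax
  have ht_le : t ≤ 1 := hconv.le_one_of_sub_eq_smul_sub hp hx ha ht.symm
  have ht_ge : -t ≤ 1 := hconv.le_one_of_sub_eq_smul_sub hp hx (hsym a ha) <| by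
    rw [neg_smul, ht]; module
  calc dist a p = |t| * dist x p := by
        rw [dist_eq_norm, dist_eq_norm, ← ht, norm_smul, Real.norm_eq_abs]
    _ ≤ 1 * dist x p := by gcongr; exact abs_le.2 ⟨by linarith, ht_le⟩
    _ = dist x p := one_mul _

theorem IsCompact.diam_inter_halfSpace_lt_diam [StrictConvexSpace ℝ E] (hC : IsCompact C)
    (hp : p ∈ C) (hsym : ∀ x ∈ C, (2 : ℝ) • p - x ∈ C) (ℓ : E →L[ℝ] ℝ)
    (hline : ∀ a ∈ C, ℓ a = ℓ p → dist a p < diam C / 2) :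
    diam (C ∩ {z | ℓ p ≤ ℓ z}) < diam C := by
  have hK : IsCompact (C ∩ {z | ℓ p ≤ ℓ z}) :=
    hC.inter_right (isClosed_le continuous_const ℓ.continuous)
  refine (diam_mono inter_subset_left hC.isBounded).lt_of_ne fun hdiam => ?_
  obtain ⟨a, ⟨haC, ha⟩, b, ⟨hbC, hb⟩, hab⟩ := hK.exists_dist_eq_diam ⟨p, hp, le_refl (ℓ p)⟩
  rw [hdiam] at hab
  have hb_eq := eq_two_smul_sub_of_dist_eq_diam hC.isBounded hsym haC hbC hab
  have hℓb : ℓ p ≤ ℓ b := hb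
  rw [hb_eq, map_sub, map_smul, smul_eq_mul] at hℓb
  have hℓa : ℓ a = ℓ p := le_antisymm (by linarith) ha
  have := hline a haC hℓa
  rw [hb_eq, dist_two_smul_sub_self] at hab
  linarith

end CentrallySymmetric

theorem nonendpoint_implies_partition
    (C : Set (EuclideanSpace ℝ (Fin 2))) (p : EuclideanSpace ℝ (Fin 2))
    (hC : IsCompact C) (hconv : Convex ℝ C) (hint : (interior C).Nonempty)
    (hsym : ∀ x ∈ C, (2 : ℝ) • p - x ∈ C)
    (hx : ∃ x ∈ frontier C, ¬ ∃ y ∈ C, dist x y = Metric.diam C) :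
    ∃ C₁ C₂ : Set (EuclideanSpace ℝ (Fin 2)), C = C₁ ∪ C₂ ∧
      Metric.diam C₁ < Metric.diam C ∧ Metric.diam C₂ < Metric.diam C := by
  obtain ⟨x, hx_fr, hx_end⟩ := hx
  have hxC : x ∈ C := hC.isClosed.frontier_subset hx_fr
  have hx_int : x ∉ interior C := hx_fr.2
  have hp : p ∈ interior C := hconv.mem_interior_of_symm hint hsym
  have hxp : dist x p < diam C / 2 := by
    refine (dist_le_half_diam_of_symm hC.isBounded hsym hxC).lt_of_ne fun h => ?_
    exact hx_end ⟨_, hsym x hxC, by rw [dist_two_smul_sub_self, h]; ring⟩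
  obtain ⟨f, hf⟩ := LinearMap.exists_ker_eq_span_singleton finrank_euclideanSpace_fin
    (sub_ne_zero.2 (ne_of_mem_of_not_mem hp hx_int).symm)
  set ℓ := LinearMap.toContinuousLinearMap f
  have hline : ∀ a ∈ C, ℓ a = ℓ p → dist a p < diam C / 2 := fun a ha h => by
    refine (hconv.dist_le_of_sub_mem_span hp hsym hx_int ha ?_).trans_lt hxp
    rw [← hf, LinearMap.mem_ker, map_sub]
    exact sub_eq_zero.2 h
  refine ⟨C ∩ {z | ℓ p ≤ ℓ z}, C ∩ {z | (-ℓ) p ≤ (-ℓ) z}, ?_,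
    hC.diam_inter_halfSpace_lt_diam (interior_subset hp) hsym ℓ hline,
    hC.diam_inter_halfSpace_lt_diam (interior_subset hp) hsym (-ℓ) ?_⟩
  · rw [← inter_union_distrib_left, eq_comm, inter_eq_left]
    intro z _
    simpa only [mem_union, mem_ofPred_eq, neg_apply, neg_le_neg_iff] using
      le_total (ℓ p) (ℓ z)
  · exact fun a ha h => hline a ha (neg_injective h)
end

section
/- Let C be a compact convex body in ℝ², centrally symmetric with center p, such that every boundary point of C is an endpoint of a diameter segment of C. Then C is the closed Euclidean ball centered at p with radius diam(C)/2. -/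
theorem all_boundary_endpoints_implies_ball
    (C : Set (EuclideanSpace ℝ (Fin 2))) (p : EuclideanSpace ℝ (Fin 2))
    (hC : IsCompact C) (hconv : Convex ℝ C) (hint : (interior C).Nonempty)
    (hsym : ∀ x ∈ C, (2 : ℝ) • p - x ∈ C)
    (hend : ∀ x ∈ frontier C, ∃ y ∈ C, dist x y = Metric.diam C) :
    C = Metric.closedBall p (Metric.diam C / 2) := by
  set D := Metric.diam C with hD
  have hbdd : Bornology.IsBounded C := hC.isBounded
  have hclosed : IsClosed C := hC.isClosed
  -- p ∈ C
  obtain ⟨x0, hx0⟩ := hint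
  have hx0C : x0 ∈ C := interior_subset hx0
  have hpC : p ∈ C := by
    have h2 := hsym x0 hx0C
    have : p = (1/2 : ℝ) • x0 + (1/2 : ℝ) • ((2:ℝ) • p - x0) := by
      module
    rw [this]
    exact hconv hx0C h2 (by norm_num) (by norm_num) (by norm_num)
  -- C ⊆ closed ball
  have hsub : ∀ x ∈ C, dist x p ≤ D / 2 := by
    intro x hx
    have h2 := hsym x hx
    have hd : dist x ((2:ℝ) • p - x) ≤ D := Metric.dist_le_diam_of_mem hbdd hx h2
    have heq : dist x ((2:ℝ) • p - x) = 2 * dist x p := by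
      rw [dist_eq_norm, dist_eq_norm]
      have : x - ((2:ℝ) • p - x) = (2:ℝ) • (x - p) := by module
      rw [this, norm_smul]
      simp
    linarith [heq ▸ hd]
  -- every frontier point is at distance exactly D/2
  have hfront : ∀ x ∈ frontier C, dist x p = D / 2 := by
    intro x hxf
    have hxC : x ∈ C := hclosed.frontier_subset hxf
    obtain ⟨y, hyC, hxy⟩ := hend x hxf
    have h1 : dist x p ≤ D / 2 := hsub x hxC
    have h2 : dist y p ≤ D / 2 := hsub y hyC
    have h3 : D ≤ dist x p + dist p y := by
      calc D = dist x y := hxy.symm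
        _ ≤ dist x p + dist p y := dist_triangle x p y
    have : dist p y = dist y p := dist_comm p y
    linarith
  apply Set.Subset.antisymm
  · intro x hx
    simpa [Metric.mem_closedBall] using hsub x hx
  · -- closed ball ⊆ C
    intro z hz
    rw [Metric.mem_closedBall] at hz
    by_contra hzC
    have hzp : z ≠ p := fun h => hzC (h ▸ hpC)
    -- segment argument
    set f : ℝ → EuclideanSpace ℝ (Fin 2) := fun t => p + t • (z - p) with hf
    have hfc : Continuous f := by fun_prop
    set S : Set ℝ := {t | t ∈ Set.Icc (0:ℝ) 1 ∧ f t ∈ C} with hS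
    have h0S : (0:ℝ) ∈ S := by
      constructor
      · exact ⟨le_refl _, zero_le_one⟩
      · simpa [hf] using hpC
    have hSne : S.Nonempty := ⟨0, h0S⟩
    have hSbdd : BddAbove S := ⟨1, fun t ht => ht.1.2⟩
    set T := sSup S with hT
    have hTmem : T ∈ S := by
      have hScl : IsClosed S := by
        have : S = Set.Icc (0:ℝ) 1 ∩ f ⁻¹' C := rfl
        rw [this]
        exact isClosed_Icc.inter (hclosed.preimage hfc)
      exact hScl.csSup_mem hSne hSbdd
    have hT0 : 0 ≤ T := le_csSup hSbdd h0S
    have hT1 : T ≤ 1 := hTmem.1.2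
    have hTne1 : T ≠ 1 := by
      intro h
      apply hzC
      have := hTmem.2
      rw [h] at this
      simpa [hf] using this
    have hTlt1 : T < 1 := lt_of_le_of_ne hT1 hTne1
    have hwC : f T ∈ C := hTmem.2
    -- f T ∈ frontier C
    have hwfront : f T ∈ frontier C := by
      rw [frontier, Set.mem_diff]
      refine ⟨subset_closure hwC, ?_⟩
      intro hwint
      have hopen : IsOpen (f ⁻¹' interior C) := isOpen_interior.preimage hfc
      obtain ⟨ε, hε, hball⟩ := Metric.isOpen_iff.1 hopen T hwint
      set t' := min 1 (T + ε / 2) with ht'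
      have ht'S : t' ∈ S := by
        constructor
        · exact ⟨le_trans hT0 (le_min (le_of_lt hTlt1) (by linarith)), min_le_left _ _⟩
        · apply interior_subset
          apply hball
          rw [Metric.mem_ball, Real.dist_eq]
          have h1 : T ≤ t' := le_min hT1 (by linarith)
          have h2 : t' ≤ T + ε / 2 := min_le_right _ _
          rw [abs_of_nonneg (by linarith)]
          linarith
      have : t' ≤ T := le_csSup hSbdd ht'S
      have hTlt' : T < t' := lt_min hTlt1 (by linarith)
      linarith
    have hdw : dist (f T) p = D / 2 := hfront _ hwfront
    have hnorm : dist (f T) p = T * dist z p := by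
      rw [dist_eq_norm, dist_eq_norm]
      have : f T - p = T • (z - p) := by simp [hf]
      rw [this, norm_smul, Real.norm_eq_abs, abs_of_nonneg hT0]
    have hzp' : 0 < dist z p := dist_pos.2 hzp
    have : T * dist z p < dist z p := by
      nlinarith
    linarith [hnorm ▸ hdw, hz]
end

section
/- A closed Euclidean disk D in ℝ² of positive radius cannot be partitioned into two subsets both of diameter strictly smaller than diam(D). (Hence the Borsuk number of a disk is at least 3.) -/
/-!
Replacing the two pieces by their closures keeps their diameters below `2r`. A point of the boundary circle and its antipode are at distance `2r`, so they never
lie in the same piece. Hence the closed pieces are disjoint on the circle, and by connectedness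
one of them contains the whole circle, antipodal pairs included.
-/

open Metric Set

variable {E : Type*} [NormedAddCommGroup E] [NormedSpace ℝ E] {p : E} {r : ℝ}

theorem Metric.pointReflection_notMem_of_diam_lt {K : Set E} (hK : Bornology.IsBounded K)
    (hdiam : diam K < 2 * r) {y : E} (hy : y ∈ sphere p r) (hyK : y ∈ K) :
    Equiv.pointReflection p y ∉ K := fun h => by
  have hdist : dist y (Equiv.pointReflection p y) = 2 * r := by
    rw [dist_right_pointReflection ℝ, dist_comm, mem_sphere.mp hy, Real.norm_two]
  linarith [dist_le_diam_of_mem hK hyK h]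

theorem Metric.sphere_not_subset_union_of_isClosed_of_diam_lt (hE : 1 < Module.rank ℝ E)
    {K₁ K₂ : Set E} (hc₁ : IsClosed K₁) (hc₂ : IsClosed K₂)
    (hb₁ : Bornology.IsBounded K₁) (hb₂ : Bornology.IsBounded K₂)
    (hd₁ : diam K₁ < 2 * r) (hd₂ : diam K₂ < 2 * r) :
    ¬ sphere p r ⊆ K₁ ∪ K₂ := by
  intro hcover
  have : Nontrivial E := rank_pos_iff_nontrivial.mp (zero_lt_one.trans hE)
  have hr : 0 ≤ r := by linarith [diam_nonneg (s := K₁)]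
  obtain ⟨y₀, hy₀⟩ := (NormedSpace.sphere_nonempty (x := p)).mpr hr
  have hanti : ∀ y ∈ sphere p r, Equiv.pointReflection p y ∈ sphere p r := fun y hy => by
    rwa [mem_sphere, dist_pointReflection_left, dist_comm]
  have hdisj : sphere p r ∩ (K₁ ∩ K₂) = ∅ := by
    refine eq_empty_of_forall_notMem fun y ⟨hy, hy₁, hy₂⟩ => ?_
    rcases hcover (hanti y hy) with h | h
    · exact pointReflection_notMem_of_diam_lt hb₁ hd₁ hy hy₁ h
    · exact pointReflection_notMem_of_diam_lt hb₂ hd₂ hy hy₂ h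
  rcases isPreconnected_iff_subset_of_disjoint_closed.mp (isPreconnected_sphere hE p r)
    K₁ K₂ hc₁ hc₂ hcover hdisj with h | h
  · exact pointReflection_notMem_of_diam_lt hb₁ hd₁ hy₀ (h hy₀) (h (hanti y₀ hy₀))
  · exact pointReflection_notMem_of_diam_lt hb₂ hd₂ hy₀ (h hy₀) (h (hanti y₀ hy₀))

theorem Metric.closedBall_ne_union_of_diam_lt (hE : 1 < Module.rank ℝ E) {C₁ C₂ : Set E}
    (hd₁ : diam C₁ < 2 * r) (hd₂ : diam C₂ < 2 * r) :
    closedBall p r ≠ C₁ ∪ C₂ := by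
  intro hcov
  have hb₁ : Bornology.IsBounded C₁ := isBounded_closedBall.subset (hcov ▸ subset_union_left)
  have hb₂ : Bornology.IsBounded C₂ := isBounded_closedBall.subset (hcov ▸ subset_union_right)
  refine sphere_not_subset_union_of_isClosed_of_diam_lt (p := p) hE isClosed_closure
    isClosed_closure hb₁.closure hb₂.closure (by rwa [diam_closure]) (by rwa [diam_closure]) ?_
  calc sphere p r ⊆ closedBall p r := sphere_subset_closedBall
    _ = C₁ ∪ C₂ := hcov
    _ ⊆ closure C₁ ∪ closure C₂ := union_subset_union subset_closure subset_closure

theorem disk_no_two_piece_partition_general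
    (p : EuclideanSpace ℝ (Fin 2)) (r : ℝ) :
    ¬ ∃ C₁ C₂ : Set (EuclideanSpace ℝ (Fin 2)),
      Metric.closedBall p r = C₁ ∪ C₂ ∧
      Metric.diam C₁ < 2 * r ∧ Metric.diam C₂ < 2 * r := by
  rintro ⟨C₁, C₂, hcov, hd₁, hd₂⟩
  have hE : 1 < Module.rank ℝ (EuclideanSpace ℝ (Fin 2)) := by
    rw [← Module.finrank_eq_rank, finrank_euclideanSpace_fin]
    norm_num
  exact closedBall_ne_union_of_diam_lt hE hd₁ hd₂ hcov

theorem disk_no_two_piece_partition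
    (p : EuclideanSpace ℝ (Fin 2)) (r : ℝ) (hr : 0 < r) :
    ¬ ∃ C₁ C₂ : Set (EuclideanSpace ℝ (Fin 2)),
      Metric.closedBall p r = C₁ ∪ C₂ ∧
      Metric.diam C₁ < 2 * r ∧ Metric.diam C₂ < 2 * r :=
  disk_no_two_piece_partition_general p r
end

section
/- Let C be a compact convex body in ℝ², and suppose C = C₁ ∪ C₂ with C₁, C₂ closed, diam(C₁) < diam(C) and diam(C₂) < diam(C). Let V_R = {x ∈ C₁ : ∃ y ∈ C, dist(x,y) = diam(C)} and V_B = {x ∈ C₂ : ∃ y ∈ C, dist(x,y) = diam(C)}. Then the closures of V_R and V_B are disjoint: closure(V_R) ∩ closure(V_B) = ∅. -/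
theorem partition_closures_of_endpoint_sets_disjoint
    (C : Set (EuclideanSpace ℝ (Fin 2)))
    (hC : IsCompact C) (hconv : Convex ℝ C) (hint : (interior C).Nonempty)
    (hdiam : 0 < Metric.diam C)
    (C₁ C₂ : Set (EuclideanSpace ℝ (Fin 2)))
    (hcl₁ : IsClosed C₁) (hcl₂ : IsClosed C₂)
    (hcover : C = C₁ ∪ C₂)
    (h₁ : Metric.diam C₁ < Metric.diam C) (h₂ : Metric.diam C₂ < Metric.diam C) :
    closure {x ∈ C₁ | ∃ y ∈ C, dist x y = Metric.diam C} ∩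
      closure {x ∈ C₂ | ∃ y ∈ C, dist x y = Metric.diam C} = ∅ := by
  -- The set of points having a witness at distance diam C is closed (C compact).
  have hSclosed : IsClosed {x : EuclideanSpace ℝ (Fin 2) |
      ∃ y ∈ C, dist x y = Metric.diam C} := by
    apply IsSeqClosed.isClosed
    intro u x hu hux
    choose y hyC hyd using hu
    obtain ⟨a, haC, φ, hφ, hay⟩ := hC.tendsto_subseq hyC
    refine ⟨a, haC, ?_⟩
    have h1 : Filter.Tendsto (fun n => dist (u (φ n)) (y (φ n))) Filter.atTop
        (nhds (dist x a)) :=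
      Filter.Tendsto.dist (hux.comp hφ.tendsto_atTop) hay
    have h2 : (fun n => dist (u (φ n)) (y (φ n))) = fun _ => Metric.diam C := by
      funext n; exact hyd (φ n)
    rw [h2] at h1
    exact (tendsto_const_nhds_iff.mp h1).symm
  -- Bounds on C₁, C₂ via diameters require boundedness.
  have hC₁C : C₁ ⊆ C := hcover ▸ Set.subset_union_left
  have hC₂C : C₂ ⊆ C := hcover ▸ Set.subset_union_right
  have hb₁ : Bornology.IsBounded C₁ := hC.isBounded.subset hC₁C
  have hb₂ : Bornology.IsBounded C₂ := hC.isBounded.subset hC₂C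
  ext x
  simp only [Set.mem_inter_iff, Set.mem_empty_iff_false, iff_false, not_and]
  intro hx₁ hx₂
  have hxC₁ : x ∈ C₁ := by
    have := closure_mono (Set.sep_subset C₁ _) hx₁
    rwa [hcl₁.closure_eq] at this
  have hxC₂ : x ∈ C₂ := by
    have := closure_mono (Set.sep_subset C₂ _) hx₂
    rwa [hcl₂.closure_eq] at this
  have hxS : x ∈ {x : EuclideanSpace ℝ (Fin 2) | ∃ y ∈ C, dist x y = Metric.diam C} := by
    have : closure {x ∈ C₁ | ∃ y ∈ C, dist x y = Metric.diam C} ⊆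
        {x : EuclideanSpace ℝ (Fin 2) | ∃ y ∈ C, dist x y = Metric.diam C} := by
      apply closure_minimal _ hSclosed
      intro z hz; exact hz.2
    exact this hx₁
  obtain ⟨y, hyC, hyd⟩ := hxS
  rw [hcover] at hyC
  rcases hyC with hy | hy
  · have : dist x y ≤ Metric.diam C₁ := Metric.dist_le_diam_of_mem hb₁ hxC₁ hy
    linarith [hyd ▸ this]
  · have : dist x y ≤ Metric.diam C₂ := Metric.dist_le_diam_of_mem hb₂ hxC₂ hy
    linarith [hyd ▸ this]
end

section
/- Every regular hexagon H of width h > 0 can be partitioned into three congruent convex subsets, each of diameter strictly less than h. Consequently, any planar convex body of diameter h contained in H can be divided into three convex subsets of diameter strictly less than h. -/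
/-!
Place the hexagon in `ℂ` with vertices `(h / √3) ζ ^ k`, `ζ = exp (π i / 3)`, and cut it along the
three rays from the centre through the midpoints of alternate edges. Multiplication by `ζ`
preserves the hexagon, so rotation by `ζ ^ 2` permutes the three pentagonal pieces cyclically.
The piece in the sector between the rays at angles `-π/6` and `π/2` lies in the disc of radius
`√3 h / 4` through its two edge midpoints, so each piece has diameter at most `√3 h / 2 < h`.
A convex body inside the hexagon is cut by the same pieces.
-/

/-- The vertices of a regular hexagon of width `h` centered at the origin:
its circumradius is `h / √3`. -/
noncomputable def hexVertex (h : ℝ) (k : Fin 6) : EuclideanSpace ℝ (Fin 2) :=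
  (WithLp.equiv 2 (Fin 2 → ℝ)).symm
    ![h / Real.sqrt 3 * Real.cos (k * Real.pi / 3),
      h / Real.sqrt 3 * Real.sin (k * Real.pi / 3)]

lemma Convex.isometryEquiv_image {E F : Type*} [NormedAddCommGroup E] [NormedSpace ℝ E]
    [NormedAddCommGroup F] [NormedSpace ℝ F] (g : E ≃ᵢ F) {s : Set E} (hs : Convex ℝ s) :
    Convex ℝ (g '' s) := by
  rw [← IsometryEquiv.coeFn_toRealAffineIsometryEquiv g]
  exact hs.affine_image g.toRealAffineIsometryEquiv.toAffineIsometry.toAffineMap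

open Complex Set Metric
open scoped Real

namespace RegularHexagon

noncomputable def ζ : Circle := Circle.exp (π / 3)

lemma coe_ζ : (ζ : ℂ) = 1 / 2 + (√3 / 2 : ℝ) * I := by
  rw [ζ, Circle.coe_exp, exp_mul_I, ← ofReal_cos, ← ofReal_sin, Real.cos_pi_div_three,
    Real.sin_pi_div_three]
  push_cast; ring

lemma ζ_re : (ζ : ℂ).re = 1 / 2 := by simp [coe_ζ]
lemma ζ_im : (ζ : ℂ).im = √3 / 2 := by simp [coe_ζ]

lemma sq_sqrt_three : √3 ^ 2 = 3 := Real.sq_sqrt (by norm_num)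

lemma ζ_sq : (ζ : ℂ) ^ 2 = ζ - 1 := by
  apply Complex.ext <;> simp only [sq, mul_re, mul_im, sub_re, sub_im, one_re, one_im, ζ_re, ζ_im]
  · linear_combination (-1 / 4 : ℝ) * sq_sqrt_three
  · ring

lemma ζ_pow_three : (ζ : ℂ) ^ 3 = -1 := by
  linear_combination ((ζ : ℂ) + 1) * ζ_sq

lemma ζ_pow_six : (ζ : ℂ) ^ 6 = 1 := by
  rw [show 6 = 3 * 2 by rfl, pow_mul, ζ_pow_three]; norm_num

noncomputable def vertex (h : ℝ) (k : ℕ) : ℂ := (h / √3 : ℝ) * (ζ : ℂ) ^ k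

noncomputable def hexagon (h : ℝ) : Set ℂ := convexHull ℝ (range fun k : Fin 6 => vertex h k)

lemma hexVertex_eq (h : ℝ) (k : Fin 6) :
    hexVertex h k = orthonormalBasisOneI.repr (vertex h k) := by
  have hk : (ζ : ℂ) ^ (k : ℕ) = exp ((k * π / 3 : ℝ) * I) := by
    rw [← Circle.coe_pow, ζ, ← Circle.exp_natCast_mul, Circle.coe_exp, mul_div_assoc]
  rw [vertex, hk]
  ext i
  fin_cases i <;> simp only [hexVertex, orthonormalBasisOneI_repr_apply, re_ofReal_mul,
    im_ofReal_mul, exp_ofReal_mul_I_re, exp_ofReal_mul_I_im] <;> rfl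

lemma convexHull_range_hexVertex (h : ℝ) :
    convexHull ℝ (range (hexVertex h)) = orthonormalBasisOneI.repr '' hexagon h := by
  rw [show hexVertex h = orthonormalBasisOneI.repr ∘ fun k : Fin 6 => vertex h k from
    funext (hexVertex_eq h), range_comp]
  exact (orthonormalBasisOneI.repr.toLinearMap.image_convexHull _).symm

lemma range_vertex (h : ℝ) : range (fun k : Fin 6 => vertex h k) = range (vertex h) := by
  refine (range_comp_subset_range Fin.val (vertex h)).antisymm ?_
  rintro _ ⟨n, rfl⟩
  exact ⟨⟨n % 6, Nat.mod_lt n (by norm_num)⟩, by simp [vertex, ← pow_eq_pow_mod n ζ_pow_six]⟩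

lemma ζ_mul_mem_hexagon {h : ℝ} {z : ℂ} (hz : z ∈ hexagon h) : (ζ : ℂ) * z ∈ hexagon h := by
  rw [hexagon, range_vertex] at *
  have hmaps : LinearMap.mulLeft ℝ (ζ : ℂ) '' range (vertex h) ⊆ range (vertex h) := by
    rintro _ ⟨_, ⟨n, rfl⟩, rfl⟩
    exact ⟨n + 1, by simp only [vertex, LinearMap.mulLeft_apply, pow_succ]; ring⟩
  refine convexHull_mono hmaps ?_
  rw [← LinearMap.image_convexHull]
  exact mem_image_of_mem _ hz

lemma pow_mul_mem_hexagon {h : ℝ} {z : ℂ} (hz : z ∈ hexagon h) (n : ℕ) :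
    (ζ : ℂ) ^ n * z ∈ hexagon h := by
  induction n with
  | zero => simpa using hz
  | succ n ih => simpa [pow_succ', mul_assoc] using ζ_mul_mem_hexagon ih

-- The coordinates of the vertex directions in the basis `1, ζ`: the three bounds are the three
-- edge inequalities of `hexagon_subset`.
lemma exists_ζ_pow_eq (k : Fin 6) :
    ∃ a b : ℝ, (ζ : ℂ) ^ (k : ℕ) = a + b * ζ ∧ a ≤ 1 ∧ b ≤ 1 ∧ a + b ≤ 1 := by
  fin_cases k
  · exact ⟨1, 0, by simp, by norm_num⟩
  · exact ⟨0, 1, by simp, by norm_num⟩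
  · exact ⟨-1, 1, by push_cast; linear_combination ζ_sq, by norm_num⟩
  · exact ⟨-1, 0, by push_cast; linear_combination ζ_pow_three, by norm_num⟩
  · exact ⟨0, -1, by push_cast; linear_combination (ζ : ℂ) * ζ_pow_three, by norm_num⟩
  · exact ⟨1, -1, by push_cast; linear_combination (ζ : ℂ) ^ 2 * ζ_pow_three - ζ_sq, by norm_num⟩

lemma hexagon_subset {h : ℝ} (hh : 0 ≤ h) :
    hexagon h ⊆ {z | √3 * z.re - z.im ≤ h ∧ √3 * z.re + z.im ≤ h ∧ z.im ≤ h / 2} := by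
  refine convexHull_min ?_ <| (convex_halfSpace_le (√3 • reLm - imLm).isLinear h).inter <|
    (convex_halfSpace_le (√3 • reLm + imLm).isLinear h).inter (convex_halfSpace_im_le (h / 2))
  rintro _ ⟨k, rfl⟩
  obtain ⟨a, b, hk, ha, hb, hab⟩ := exists_ζ_pow_eq k
  have hre : √3 * (vertex h k).re = h * (a + b / 2) := by
    simp only [vertex, hk, add_re, ofReal_re, mul_re, ofReal_im, ζ_re, ζ_im]
    field_simp
    ring
  have him : (vertex h k).im = h * b / 2 := by
    simp only [vertex, hk, add_im, ofReal_im, mul_im, ofReal_re, ζ_re, ζ_im]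
    field_simp
    ring
  refine ⟨?_, ?_, ?_⟩ <;> nlinarith

-- The sector between the rays at angles `-π/6` and `π/2`, through two edge midpoints.
def sector : Set ℂ := {z | 0 ≤ z.re ∧ 0 ≤ z.re + √3 * z.im}

lemma convex_sector : Convex ℝ sector :=
  (convex_halfSpace_re_ge 0).inter (convex_halfSpace_ge (reLm + √3 • imLm).isLinear 0)

lemma mem_sector_or (z : ℂ) :
    z ∈ sector ∨ (ζ : ℂ) ^ 4 * z ∈ sector ∨ (ζ : ℂ) ^ 2 * z ∈ sector := by
  set u := z.re + √3 * z.im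
  set v := z.re - √3 * z.im
  have h4 : ((ζ : ℂ) ^ 4 * z).re = -v / 2 ∧
      ((ζ : ℂ) ^ 4 * z).re + √3 * ((ζ : ℂ) ^ 4 * z).im = -2 * z.re := by
    rw [show (ζ : ℂ) ^ 4 = ζ * ζ ^ 3 by ring, ζ_pow_three]
    simp only [mul_neg_one, neg_mul, neg_re, neg_im, mul_re, mul_im, ζ_re, ζ_im]
    constructor
    · ring
    · linear_combination (-z.re / 2) * sq_sqrt_three
  have h2 : ((ζ : ℂ) ^ 2 * z).re = -u / 2 ∧
      ((ζ : ℂ) ^ 2 * z).re + √3 * ((ζ : ℂ) ^ 2 * z).im = v := by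
    rw [ζ_sq]
    simp only [sub_mul, one_mul, sub_re, sub_im, mul_re, mul_im, ζ_re, ζ_im]
    constructor
    · ring
    · linear_combination (z.re / 2) * sq_sqrt_three
  simp only [sector, mem_ofPred_eq, h4, h2]
  by_cases hre : 0 ≤ z.re <;> by_cases hu : 0 ≤ u <;> by_cases hv : 0 ≤ v
  all_goals first
    | exact Or.inl ⟨by linarith, by linarith⟩
    | exact Or.inr (Or.inl ⟨by linarith, by linarith⟩)
    | exact Or.inr (Or.inr ⟨by linarith, by linarith⟩)

def basePiece (h : ℝ) : Set ℂ := hexagon h ∩ sector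

-- With `u = √3 x` and `b = y` the conclusion reads
-- `(x - √3 h / 8) ^ 2 + (y - h / 8) ^ 2 ≤ 3 h ^ 2 / 16`.
lemma quadratic_le_of_mem_pentagon {h u b : ℝ} (h₁ : u - b ≤ h) (h₂ : u + b ≤ h) (h₃ : b ≤ h / 2)
    (h₄ : 0 ≤ u) (h₅ : 0 ≤ u + 3 * b) :
    8 * u ^ 2 + 24 * b ^ 2 - 6 * h * (u + b) - 3 * h ^ 2 ≤ 0 := by
  nlinarith [mul_nonneg (sub_nonneg.2 h₁) h₅, mul_nonneg (sub_nonneg.2 h₃) h₄,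
    mul_nonneg (sub_nonneg.2 h₂) h₅, mul_nonneg (sub_nonneg.2 h₂) h₄,
    mul_nonneg (sub_nonneg.2 h₁) h₄, mul_nonneg (sub_nonneg.2 h₃) h₅,
    mul_nonneg (sub_nonneg.2 h₁) (sub_nonneg.2 h₃),
    mul_nonneg (sub_nonneg.2 h₂) (sub_nonneg.2 h₃),
    mul_nonneg (sub_nonneg.2 h₁) (sub_nonneg.2 h₂)]

lemma basePiece_subset_closedBall {h : ℝ} (hh : 0 ≤ h) :
    basePiece h ⊆ closedBall ⟨√3 * h / 8, h / 8⟩ (√3 * h / 4) := by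
  rintro z ⟨hz, hre, hu⟩
  obtain ⟨h₁, h₂, h₃⟩ := hexagon_subset hh hz
  have hs := sq_sqrt_three
  have key := quadratic_le_of_mem_pentagon (u := √3 * z.re) (b := z.im) h₁ h₂ h₃
    (by positivity) (by nlinarith [mul_nonneg (Real.sqrt_nonneg 3) hu])
  rw [mem_closedBall, dist_eq_re_im, Real.sqrt_le_left (by positivity)]
  nlinarith

lemma diam_basePiece_lt {h : ℝ} (hh : 0 < h) : diam (basePiece h) < h := by
  have hs : √3 < 2 := by nlinarith [sq_sqrt_three, Real.sqrt_nonneg 3]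
  calc diam (basePiece h) ≤ 2 * (√3 * h / 4) :=
        (diam_mono (basePiece_subset_closedBall hh.le) isBounded_closedBall).trans
          (diam_closedBall (by positivity))
    _ < h := by nlinarith

def piece (h : ℝ) (j : ℕ) : Set ℂ := rotation (ζ ^ (2 * j)) '' basePiece h

lemma piece_zero (h : ℝ) : piece h 0 = basePiece h := by
  simp [piece]

lemma convex_piece (h : ℝ) (j : ℕ) : Convex ℝ (piece h j) :=
  ((convex_convexHull ℝ _).inter convex_sector).linear_image (rotation (ζ ^ (2 * j))).toLinearMap

lemma isBounded_piece {h : ℝ} (hh : 0 ≤ h) (j : ℕ) : Bornology.IsBounded (piece h j) :=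
  (rotation _).lipschitz.isBounded_image
    (isBounded_closedBall.subset (basePiece_subset_closedBall hh))

lemma diam_piece_lt {h : ℝ} (hh : 0 < h) (j : ℕ) : diam (piece h j) < h := by
  rw [piece, (rotation _).isometry.diam_image]
  exact diam_basePiece_lt hh

lemma mem_piece {h : ℝ} {z : ℂ} {j n : ℕ} (hjn : 2 * j + n = 6) (hz : z ∈ hexagon h)
    (hs : (ζ : ℂ) ^ n * z ∈ sector) : z ∈ piece h j := by
  refine ⟨_, ⟨pow_mul_mem_hexagon hz n, hs⟩, ?_⟩
  rw [rotation_apply, Circle.coe_pow, ← mul_assoc, ← pow_add, hjn, ζ_pow_six, one_mul]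

lemma hexagon_eq_union (h : ℝ) : hexagon h = piece h 0 ∪ piece h 1 ∪ piece h 2 := by
  refine Subset.antisymm (fun z hz => ?_) ?_
  · rcases mem_sector_or z with hs | hs | hs
    · exact Or.inl (Or.inl (piece_zero h ▸ ⟨hz, hs⟩))
    · exact Or.inl (Or.inr (mem_piece (by norm_num) hz hs))
    · exact Or.inr (mem_piece (by norm_num) hz hs)
  · rintro _ ((⟨z, ⟨hz, -⟩, rfl⟩ | ⟨z, ⟨hz, -⟩, rfl⟩) | ⟨z, ⟨hz, -⟩, rfl⟩) <;>
      exact pow_mul_mem_hexagon hz _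

end RegularHexagon

open RegularHexagon in
theorem hexagon_three_congruent_pieces (h : ℝ) (hh : 0 < h)
    (f : EuclideanSpace ℝ (Fin 2) ≃ᵢ EuclideanSpace ℝ (Fin 2))
    (H : Set (EuclideanSpace ℝ (Fin 2)))
    (hH : H = f '' convexHull ℝ (Set.range (hexVertex h))) :
    (∃ H₁ H₂ H₃ : Set (EuclideanSpace ℝ (Fin 2)),
      H = H₁ ∪ H₂ ∪ H₃ ∧
      Convex ℝ H₁ ∧ Convex ℝ H₂ ∧ Convex ℝ H₃ ∧
      Metric.diam H₁ < h ∧ Metric.diam H₂ < h ∧ Metric.diam H₃ < h ∧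
      (∃ g : EuclideanSpace ℝ (Fin 2) ≃ᵢ EuclideanSpace ℝ (Fin 2), g '' H₁ = H₂) ∧
      (∃ g : EuclideanSpace ℝ (Fin 2) ≃ᵢ EuclideanSpace ℝ (Fin 2), g '' H₁ = H₃)) ∧
    ∀ C : Set (EuclideanSpace ℝ (Fin 2)), IsCompact C → Convex ℝ C →
      Metric.diam C = h → C ⊆ H →
      ∃ C₁ C₂ C₃ : Set (EuclideanSpace ℝ (Fin 2)), C = C₁ ∪ C₂ ∪ C₃ ∧
        Convex ℝ C₁ ∧ Convex ℝ C₂ ∧ Convex ℝ C₃ ∧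
        Metric.diam C₁ < h ∧ Metric.diam C₂ < h ∧ Metric.diam C₃ < h := by
  set g : ℂ ≃ᵢ EuclideanSpace ℝ (Fin 2) := orthonormalBasisOneI.repr.toIsometryEquiv.trans f
  set Q : ℕ → Set (EuclideanSpace ℝ (Fin 2)) := fun j => g '' piece h j
  have hcover : H = Q 0 ∪ Q 1 ∪ Q 2 := by
    rw [hH, convexHull_range_hexVertex, image_image, hexagon_eq_union]
    simp only [image_union, Q]
    rfl
  have hconv (j : ℕ) : Convex ℝ (Q j) := (convex_piece h j).isometryEquiv_image g
  have hbdd (j : ℕ) : Bornology.IsBounded (Q j) :=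
    g.isometry.lipschitz.isBounded_image (isBounded_piece hh.le j)
  have hdiam (j : ℕ) : diam (Q j) < h := by
    rw [g.isometry.diam_image]; exact diam_piece_lt hh j
  have hcongr (j : ℕ) :
      ∃ φ : EuclideanSpace ℝ (Fin 2) ≃ᵢ EuclideanSpace ℝ (Fin 2), φ '' Q 0 = Q j :=
    ⟨(g.symm.trans (rotation (ζ ^ (2 * j))).toIsometryEquiv).trans g, by
      simp [Q, piece, image_image]⟩
  refine ⟨⟨Q 0, Q 1, Q 2, hcover, hconv 0, hconv 1, hconv 2, hdiam 0, hdiam 1, hdiam 2,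
    hcongr 1, hcongr 2⟩, fun C _ hC _ hCH => ?_⟩
  refine ⟨C ∩ Q 0, C ∩ Q 1, C ∩ Q 2, ?_, hC.inter (hconv 0), hC.inter (hconv 1),
    hC.inter (hconv 2), ?_, ?_, ?_⟩
  · rw [← inter_union_distrib_left, ← inter_union_distrib_left, ← hcover, inter_eq_left.2 hCH]
  all_goals exact (diam_mono inter_subset_right (hbdd _)).trans_lt (hdiam _)
end

section
/- Let x, y, p ∈ ℝ² and suppose p does not lie on the segment [x, y]. Let q be the orthogonal projection of p onto the line through x and y, and assume (WLOG) dist(x, q) ≥ dist(y, q). Then 2·dist(x, p) > dist(x, y). (This is the key inequality in the proof that diameter segments of a centrally symmetric body pass through the center.) -/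
open RealInnerProductSpace

theorem key_inequality_off_segment
    (x y p q : EuclideanSpace ℝ (Fin 2))
    (hxy : x ≠ y)
    (hp : p ∉ segment ℝ x y)
    (hq : q ∈ affineSpan ℝ ({x, y} : Set (EuclideanSpace ℝ (Fin 2))))
    (hperp : ⟪p - q, y - x⟫ = (0 : ℝ))
    (hwlog : dist y q ≤ dist x q) :
    dist x y < 2 * dist x p := by
  have hdir : q -ᵥ x ∈ vectorSpan ℝ ({x, y} : Set (EuclideanSpace ℝ (Fin 2))) := by
    have := AffineSubspace.vsub_mem_direction hq
      (left_mem_affineSpan_pair ℝ x y)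
    rwa [direction_affineSpan] at this
  obtain ⟨t, ht⟩ := mem_vectorSpan_pair_rev.mp hdir
  have hq_eq : q - x = t • (y - x) := by
    exact ht.symm
  -- Pythagoras: dist x p ^ 2 = dist x q ^ 2 + dist q p ^ 2
  have hperp' : ⟪x - q, q - p⟫ = (0 : ℝ) := by
    have : ⟪p - q, q - x⟫ = (0 : ℝ) := by
      rw [hq_eq, inner_smul_right, hperp, mul_zero]
    rw [show x - q = -(q - x) by abel, show q - p = -(p - q) by abel,
      inner_neg_neg, real_inner_comm, this]
  have hpyth : dist x p ^ 2 = dist x q ^ 2 + dist q p ^ 2 := by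
    rw [dist_eq_norm, dist_eq_norm, dist_eq_norm,
      show x - p = (x - q) + (q - p) by abel, ← real_inner_self_eq_norm_sq,
      ← real_inner_self_eq_norm_sq, ← real_inner_self_eq_norm_sq]
    rw [inner_add_add_self, real_inner_comm (x - q) (q - p), hperp']
    ring
  have hxq_le : dist x q ≤ dist x p := by
    nlinarith [sq_nonneg (dist q p), (dist_nonneg : (0:ℝ) ≤ dist x q),
      (dist_nonneg : (0:ℝ) ≤ dist x p)]
  by_cases hqxy : q ∈ segment ℝ x y
  · -- then p ≠ q, so dist x q < dist x p
    have hpq : p ≠ q := fun h => hp (h ▸ hqxy)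
    have : (0:ℝ) < dist q p := dist_pos.mpr (Ne.symm hpq)
    have hlt : dist x q < dist x p := by
      nlinarith [(dist_nonneg : (0:ℝ) ≤ dist x q), (dist_nonneg : (0:ℝ) ≤ dist x p)]
    calc dist x y ≤ dist x q + dist q y := dist_triangle x q y
      _ ≤ 2 * dist x q := by rw [dist_comm q y] at *; linarith
      _ < 2 * dist x p := by linarith
  · have hne : dist x q + dist q y ≠ dist x y := by
      intro h
      exact hqxy (mem_segment_iff_wbtw.mpr (dist_add_dist_eq_iff.mp h))
    have : dist x y < dist x q + dist q y :=
      lt_of_le_of_ne (dist_triangle x q y) (Ne.symm hne)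
    rw [dist_comm q y] at this
    linarith
end
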